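/- arXiv:1905.09191 — 2 statements merged into one kernel-verified Lean document; each statement's English description precedes it below -/
import Mathlib

section
/- Intra-option policy gradient theorem for the soft robust loss (Theorem 2): In the finite rectangular option MDP, let the intra-option policies be a parameterized family πo : ℝ → O → S → A → ℝ (for each θ ∈ ℝ, πo θ ω s a ≥ 0 and ∑_a πo θ ω s a = 1), while πΩ, β, K, c, w do not depend on θ, and for each θ let (QΩ θ, Qo θ, Qβ θ, VΩ θ) satisfy the rectangular Bellman system with intra-option policies πo θ; let Pγ θ, Pγ^k θ and the averaged value functions Q̄o θ be defined accordingly. Define the discounted state–option weighting d̄ θ ((s₀,ω₀),(s,ω)) := ∑_{k=0}^∞ Pγ^k θ ((s₀,ω₀),(s,ω)) (this series converges since ∑_{(s,ω)} Pγ^k θ ((s₀,ω₀),(s,ω)) = γ^k and 0 ≤ γ < 1). Fix θ₀ ∈ ℝ and assume that for every ω, s, a the map θ ↦ πo θ ω s a is differentiable at θ₀ and for every s, ω, p the map θ ↦ QΩ θ s ω p is differentiable at θ₀. Then for every initial state–option pair (s₀, ω₀): ∑_p w p * deriv (θ ↦ QΩ θ s₀ ω₀ p) θ₀ = ∑_{(s,ω)}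 d̄ θ₀ ((s₀,ω₀),(s,ω)) * ∑_a (deriv (θ ↦ πo θ ω s a) θ₀) * Q̄o θ₀ s ω a. -/
/-!
Averaging the rectangular Bellman system over the model parameter turns it into an ordinary
option Bellman system for the average kernel `K̄`: `Q̄Ω θ = ∑ₐ πo θ · Q̄o θ` and
`Q̄o θ = c + γ K̄ U(Q̄Ω θ)`, with `U` the value upon arrival. Differentiating in `θ`, the
gradient `∂Q̄Ω` solves the same kind of Bellman equation `∂Q̄Ω = u + Pγ ∂Q̄Ω` with reward
`u = ∑ₐ ∂πo · Q̄o`. As `Pγ` is nonnegative with row sums `γ < 1`, its `L∞`-operator norm is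
below one and the Neumann series gives `∂Q̄Ω = ∑ₖ Pγᵏ u`.
-/

open scoped Classical

open Finset

variable {S O A P : Type*} [Fintype S] [Fintype O] [Fintype A] [Fintype P]

/-- The average transition kernel `K̄ s a s' = ∑ p, w p * K p s a s'`. -/
noncomputable def Kbar (w : P → ℝ) (K : P → S → A → S → ℝ) (s : S) (a : A) (s' : S) : ℝ :=
  ∑ p, w p * K p s a s'

/-- One-step discounted state–option kernel `Pγ`. -/
noncomputable def Pgam (w : P → ℝ) (K : P → S → A → S → ℝ) (γ : ℝ)
    (πo : O → S → A → ℝ) (β : O → S → ℝ) (πΩ : S → O → ℝ)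
    (x y : S × O) : ℝ :=
  ∑ a, πo x.2 x.1 a * γ * Kbar w K x.1 a y.1 *
    ((1 - β x.2 y.1) * (if y.2 = x.2 then 1 else 0) + β x.2 y.1 * πΩ y.1 y.2)

/-- k-step iterates `Pγ^k` of the one-step discounted state–option kernel. -/
noncomputable def PgamIter (w : P → ℝ) (K : P → S → A → S → ℝ) (γ : ℝ)
    (πo : O → S → A → ℝ) (β : O → S → ℝ) (πΩ : S → O → ℝ) :
    ℕ → S × O → S × O → ℝ
  | 0, x, y => if y = x then 1 else 0
  | (k + 1), x, y => ∑ z, Pgam w K γ πo β πΩ x z * PgamIter w K γ πo β πΩ k z y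

open scoped Matrix

namespace Matrix

variable {n : Type*} [Fintype n] [DecidableEq n]

attribute [local instance] Matrix.linftyOpNormedRing

theorem linfty_opNorm_le_of_nonneg_of_sum_le {M : Matrix n n ℝ} {r : ℝ} (hr : 0 ≤ r)
    (hM0 : ∀ i j, 0 ≤ M i j) (hM : ∀ i, ∑ j, M i j ≤ r) : ‖M‖ ≤ r := by
  rw [linfty_opNorm_def, ← NNReal.coe_mk r hr, NNReal.coe_le_coe]
  refine Finset.sup_le fun i _ => ?_
  rw [← NNReal.coe_le_coe]
  push_cast
  simpa [Real.norm_eq_abs, abs_of_nonneg (hM0 i _)] using hM i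

theorem sum_tsum_pow_mul_eq_of_eq_add_mulVec {M : Matrix n n ℝ} (hM : ‖M‖ < 1) {f u : n → ℝ}
    (hf : f = u + M *ᵥ f) (i : n) : ∑ j, (∑' k : ℕ, (M ^ k) i j) * u j = f i := by
  -- instance search misses completeness for the `L∞`-operator norm, whose uniformity
  -- unfolds to the `Pi` one
  have : HasSummableGeomSeries (Matrix n n ℝ) :=
    @instHasSummableGeomSeriesOfCompleteSpace _ _ (inferInstanceAs (CompleteSpace (n → n → ℝ)))
  have hsum : Summable fun k : ℕ => M ^ k := summable_geometric_of_norm_lt_one hM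
  have hgeom : (∑' k : ℕ, M ^ k) * (1 - M) = 1 := geom_series_mul_neg M hM
  have hu : u = (1 - M) *ᵥ f := by rw [sub_mulVec, one_mulVec]; exact eq_sub_of_add_eq hf.symm
  have hneumann : (∑' k : ℕ, M ^ k) *ᵥ u = f := by
    rw [hu, mulVec_mulVec, hgeom, one_mulVec]
  have hentry : ∀ j, (∑' k : ℕ, M ^ k) i j = ∑' k : ℕ, (M ^ k) i j := fun j => by
    rw [← tsum_apply (Pi.summable.mp hsum i)]; exact congrFun (tsum_apply hsum) j
  simp only [← hneumann, mulVec, dotProduct, hentry]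

end Matrix

/-- The option-critic `U(s, ω)`: the value of arriving in `s` while executing `ω`, before the
termination decision. -/
def arrivalValue (β : O → S → ℝ) (πΩ : S → O → ℝ) (g : S × O → ℝ) (s : S) (ω : O) : ℝ :=
  (1 - β ω s) * g (s, ω) + β ω s * ∑ ω', πΩ s ω' * g (s, ω')

section Kernel

variable {w : P → ℝ} {K : P → S → A → S → ℝ} {γ : ℝ} {πo : O → S → A → ℝ}
  {β : O → S → ℝ} {πΩ : S → O → ℝ}

omit [Fintype S] [Fintype A] in
theorem Kbar_nonneg (hw0 : ∀ p, 0 ≤ w p) (hK0 : ∀ p s a s', 0 ≤ K p s a s')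
    (s : S) (a : A) (s' : S) : 0 ≤ Kbar w K s a s' :=
  sum_nonneg fun p _ => mul_nonneg (hw0 p) (hK0 p s a s')

omit [Fintype A] in
theorem sum_Kbar (hw1 : ∑ p, w p = 1) (hK1 : ∀ p s a, ∑ s', K p s a s' = 1)
    (s : S) (a : A) : ∑ s', Kbar w K s a s' = 1 := by
  simp only [Kbar]
  rw [sum_comm]
  simp_rw [← mul_sum, hK1, mul_one, hw1]

omit [Fintype S] in
theorem arrivalValue_eq_sum (g : S × O → ℝ) (s : S) (ω : O) :
    arrivalValue β πΩ g s ω =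
      ∑ ω', ((1 - β ω s) * (if ω' = ω then 1 else 0) + β ω s * πΩ s ω') * g (s, ω') := by
  simp [arrivalValue, add_mul, sum_add_distrib, mul_sum, mul_assoc]

theorem Pgam_mulVec (g : S × O → ℝ) (s : S) (ω : O) :
    (Matrix.of (Pgam w K γ πo β πΩ) *ᵥ g) (s, ω) =
      ∑ a, πo ω s a * (γ * ∑ s', Kbar w K s a s' * arrivalValue β πΩ g s' ω) := by
  simp only [Matrix.mulVec, dotProduct, Matrix.of_apply, Pgam, Fintype.sum_prod_type,
    arrivalValue_eq_sum, sum_mul, mul_sum]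
  conv_rhs => rw [sum_comm]
  refine sum_congr rfl fun s' _ => ?_
  rw [sum_comm]
  exact sum_congr rfl fun a _ => sum_congr rfl fun ω' _ => by ring

omit [Fintype S] in
theorem arrivalValue_one (hπΩ1 : ∀ s, ∑ ω, πΩ s ω = 1) (s : S) (ω : O) :
    arrivalValue β πΩ (fun _ => 1) s ω = 1 := by
  simp [arrivalValue, hπΩ1]

theorem sum_Pgam (hw1 : ∑ p, w p = 1) (hK1 : ∀ p s a, ∑ s', K p s a s' = 1)
    (hπo1 : ∀ ω s, ∑ a, πo ω s a = 1) (hπΩ1 : ∀ s, ∑ ω, πΩ s ω = 1) (x : S × O) :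
    ∑ y, Pgam w K γ πo β πΩ x y = γ := by
  have h := Pgam_mulVec (w := w) (K := K) (γ := γ) (πo := πo) (β := β) (πΩ := πΩ)
    (fun _ => 1) x.1 x.2
  simp only [Matrix.mulVec, dotProduct, Matrix.of_apply, mul_one, arrivalValue_one hπΩ1,
    sum_Kbar hw1 hK1] at h
  rw [h, ← sum_mul, hπo1, one_mul]

omit [Fintype S] [Fintype O] in
theorem Pgam_nonneg (hγ0 : 0 ≤ γ) (hw0 : ∀ p, 0 ≤ w p) (hK0 : ∀ p s a s', 0 ≤ K p s a s')
    (hπo0 : ∀ ω s a, 0 ≤ πo ω s a) (hπΩ0 : ∀ s ω, 0 ≤ πΩ s ω)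
    (hβ0 : ∀ ω s, 0 ≤ β ω s) (hβ1 : ∀ ω s, β ω s ≤ 1) (x y : S × O) :
    0 ≤ Pgam w K γ πo β πΩ x y := by
  refine sum_nonneg fun a _ => mul_nonneg ?_ (add_nonneg ?_ ?_)
  · exact mul_nonneg (mul_nonneg (hπo0 _ _ _) hγ0) (Kbar_nonneg hw0 hK0 _ _ _)
  · exact mul_nonneg (sub_nonneg.2 (hβ1 _ _)) (by positivity)
  · exact mul_nonneg (hβ0 _ _) (hπΩ0 _ _)

theorem PgamIter_eq_pow (k : ℕ) (x y : S × O) :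
    PgamIter w K γ πo β πΩ k x y = (Matrix.of (Pgam w K γ πo β πΩ) ^ k) x y := by
  induction k generalizing x with
  | zero => simp [PgamIter, Matrix.one_apply, eq_comm]
  | succ k ih => simp [PgamIter, pow_succ', Matrix.mul_apply, ih]

attribute [local instance] Matrix.linftyOpNormedRing in
theorem sum_tsum_PgamIter_mul_eq_of_eq_add_mulVec (hγ0 : 0 ≤ γ) (hγ1 : γ < 1)
    (hw0 : ∀ p, 0 ≤ w p) (hw1 : ∑ p, w p = 1)
    (hK0 : ∀ p s a s', 0 ≤ K p s a s') (hK1 : ∀ p s a, ∑ s', K p s a s' = 1)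
    (hπo0 : ∀ ω s a, 0 ≤ πo ω s a) (hπo1 : ∀ ω s, ∑ a, πo ω s a = 1)
    (hπΩ0 : ∀ s ω, 0 ≤ πΩ s ω) (hπΩ1 : ∀ s, ∑ ω, πΩ s ω = 1)
    (hβ0 : ∀ ω s, 0 ≤ β ω s) (hβ1 : ∀ ω s, β ω s ≤ 1)
    {f u : S × O → ℝ} (hf : f = u + Matrix.of (Pgam w K γ πo β πΩ) *ᵥ f) (x : S × O) :
    ∑ y, (∑' k : ℕ, PgamIter w K γ πo β πΩ k x y) * u y = f x := by
  have hnorm : ‖Matrix.of (Pgam w K γ πo β πΩ)‖ < 1 :=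
    (Matrix.linfty_opNorm_le_of_nonneg_of_sum_le hγ0
      (Pgam_nonneg hγ0 hw0 hK0 hπo0 hπΩ0 hβ0 hβ1)
      fun x => (sum_Pgam hw1 hK1 hπo1 hπΩ1 x).le).trans_lt hγ1
  simp_rw [PgamIter_eq_pow]
  exact Matrix.sum_tsum_pow_mul_eq_of_eq_add_mulVec hnorm hf x

end Kernel

omit [Fintype S] in
theorem hasDerivAt_arrivalValue {β : O → S → ℝ} {πΩ : S → O → ℝ} {G : ℝ → S × O → ℝ}
    {g : S × O → ℝ} {θ₀ : ℝ} (hG : ∀ x, HasDerivAt (fun θ => G θ x) (g x) θ₀) (s : S) (ω : O) :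
    HasDerivAt (fun θ => arrivalValue β πΩ (G θ) s ω) (arrivalValue β πΩ g s ω) θ₀ :=
  ((hG (s, ω)).const_mul _).add
    ((HasDerivAt.fun_sum fun ω' _ => (hG (s, ω')).const_mul (πΩ s ω')).const_mul _)

section RectangularBellman

variable {w : P → ℝ} {K : P → S → A → S → ℝ} {γ : ℝ} {c : S → A → ℝ}
  {πo : O → S → A → ℝ} {β : O → S → ℝ} {πΩ : S → O → ℝ}
  {QΩ : S → O → P → ℝ} {Qo : S → O → A → P → ℝ} {Qβ : S → O → P → ℝ} {VΩ : S → P → ℝ}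

omit [Fintype A] in
theorem sum_mul_sum_mul_eq_sum_Kbar_mul (g : S → ℝ) (s : S) (a : A) :
    ∑ p, w p * ∑ s', K p s a s' * g s' = ∑ s', Kbar w K s a s' * g s' := by
  simp only [Kbar, mul_sum, sum_mul]
  rw [sum_comm]
  exact sum_congr rfl fun s' _ => sum_congr rfl fun p _ => by ring

omit [Fintype S] [Fintype O] in
theorem sum_mul_QΩ_eq (hQΩ : ∀ s ω p, QΩ s ω p = ∑ a, πo ω s a * Qo s ω a p) (s : S) (ω : O) :
    ∑ p, w p * QΩ s ω p = ∑ a, πo ω s a * ∑ p, w p * Qo s ω a p := by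
  simp only [hQΩ, mul_sum]
  rw [sum_comm]
  exact sum_congr rfl fun a _ => sum_congr rfl fun p _ => by ring

omit [Fintype S] in
theorem sum_mul_Qβ_eq_arrivalValue
    (hQβ : ∀ s ω p, Qβ s ω p = (1 - β ω s) * QΩ s ω p + β ω s * VΩ s p)
    (hVΩ : ∀ s p, VΩ s p = ∑ ω, πΩ s ω * QΩ s ω p) (s : S) (ω : O) :
    ∑ p, w p * Qβ s ω p = arrivalValue β πΩ (fun x => ∑ p, w p * QΩ x.1 x.2 p) s ω := by
  simp only [hQβ, hVΩ, arrivalValue, mul_add, sum_add_distrib, mul_sum]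
  congr 1
  · exact sum_congr rfl fun p _ => by ring
  · rw [sum_comm]
    exact sum_congr rfl fun ω' _ => sum_congr rfl fun p _ => by ring

omit [Fintype A] in
theorem sum_mul_Qo_eq (hw1 : ∑ p, w p = 1)
    (hQo : ∀ s ω a p, Qo s ω a p = c s a + γ * ∑ s', K p s a s' * (∑ p', w p' * Qβ s' ω p'))
    (hQβ : ∀ s ω p, Qβ s ω p = (1 - β ω s) * QΩ s ω p + β ω s * VΩ s p)
    (hVΩ : ∀ s p, VΩ s p = ∑ ω, πΩ s ω * QΩ s ω p) (s : S) (ω : O) (a : A) :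
    ∑ p, w p * Qo s ω a p = c s a + γ * ∑ s', Kbar w K s a s' *
      arrivalValue β πΩ (fun x => ∑ p, w p * QΩ x.1 x.2 p) s' ω := by
  have hsplit : ∀ p, w p * Qo s ω a p = w p * c s a +
      γ * (w p * ∑ s', K p s a s' * ∑ p', w p' * Qβ s' ω p') := fun p => by rw [hQo]; ring
  rw [sum_congr rfl fun p _ => hsplit p, sum_add_distrib, ← sum_mul, hw1, one_mul, ← mul_sum,
    sum_mul_sum_mul_eq_sum_Kbar_mul]
  simp_rw [sum_mul_Qβ_eq_arrivalValue hQβ hVΩ]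

end RectangularBellman

theorem eq_add_Pgam_mulVec_of_hasDerivAt {w : P → ℝ} {K : P → S → A → S → ℝ} {γ : ℝ}
    {c : S → A → ℝ} {πo : ℝ → O → S → A → ℝ} {β : O → S → ℝ} {πΩ : S → O → ℝ}
    {V : ℝ → S × O → ℝ} {Q : ℝ → S → O → A → ℝ} {θ₀ : ℝ} {f : S × O → ℝ}
    (hV : ∀ θ s ω, V θ (s, ω) = ∑ a, πo θ ω s a * Q θ s ω a)
    (hQ : ∀ θ s ω a,
      Q θ s ω a = c s a + γ * ∑ s', Kbar w K s a s' * arrivalValue β πΩ (V θ) s' ω)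
    (hdπ : ∀ ω s a, DifferentiableAt ℝ (fun θ => πo θ ω s a) θ₀)
    (hdV : ∀ x, HasDerivAt (fun θ => V θ x) (f x) θ₀) :
    f = (fun x => ∑ a, deriv (fun θ => πo θ x.2 x.1 a) θ₀ * Q θ₀ x.1 x.2 a) +
      Matrix.of (Pgam w K γ (πo θ₀) β πΩ) *ᵥ f := by
  funext ⟨s, ω⟩
  have hdQ : ∀ a, HasDerivAt (fun θ => Q θ s ω a)
      (γ * ∑ s', Kbar w K s a s' * arrivalValue β πΩ f s' ω) θ₀ := by
    intro a
    simp_rw [hQ]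
    exact ((HasDerivAt.fun_sum fun s' _ =>
      (hasDerivAt_arrivalValue hdV s' ω).const_mul _).const_mul γ).const_add _
  have hdV' : HasDerivAt (fun θ => V θ (s, ω)) (∑ a, (deriv (fun θ => πo θ ω s a) θ₀ *
      Q θ₀ s ω a + πo θ₀ ω s a * (γ * ∑ s', Kbar w K s a s' * arrivalValue β πΩ f s' ω))) θ₀ := by
    simp_rw [hV]
    exact HasDerivAt.fun_sum fun a _ => (hdπ ω s a).hasDerivAt.mul (hdQ a)
  rw [Pi.add_apply, Pgam_mulVec, (hdV (s, ω)).unique hdV', sum_add_distrib]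

theorem intra_option_policy_gradient_soft_robust_general
    (γ : ℝ) (hγ0 : 0 ≤ γ) (hγ1 : γ < 1)
    (c : S → A → ℝ)
    (K : P → S → A → S → ℝ)
    (hK0 : ∀ p s a s', 0 ≤ K p s a s') (hK1 : ∀ p s a, ∑ s', K p s a s' = 1)
    (w : P → ℝ) (hw0 : ∀ p, 0 ≤ w p) (hw1 : ∑ p, w p = 1)
    (πΩ : S → O → ℝ)
    (hπΩ0 : ∀ s ω, 0 ≤ πΩ s ω) (hπΩ1 : ∀ s, ∑ ω, πΩ s ω = 1)
    (πo : ℝ → O → S → A → ℝ)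
    (hπo0 : ∀ θ ω s a, 0 ≤ πo θ ω s a) (hπo1 : ∀ θ ω s, ∑ a, πo θ ω s a = 1)
    (β : O → S → ℝ) (hβ0 : ∀ ω s, 0 ≤ β ω s) (hβ1 : ∀ ω s, β ω s ≤ 1)
    (QΩ : ℝ → S → O → P → ℝ) (Qo : ℝ → S → O → A → P → ℝ)
    (Qβ : ℝ → S → O → P → ℝ) (VΩ : ℝ → S → P → ℝ)
    (hQΩ : ∀ θ s ω p, QΩ θ s ω p = ∑ a, πo θ ω s a * Qo θ s ω a p)
    (hQo : ∀ θ s ω a p,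
      Qo θ s ω a p = c s a + γ * ∑ s', K p s a s' * (∑ p', w p' * Qβ θ s' ω p'))
    (hQβ : ∀ θ s ω p, Qβ θ s ω p = (1 - β ω s) * QΩ θ s ω p + β ω s * VΩ θ s p)
    (hVΩ : ∀ θ s p, VΩ θ s p = ∑ ω, πΩ s ω * QΩ θ s ω p)
    (θ₀ : ℝ)
    (hdπ : ∀ ω s a, DifferentiableAt ℝ (fun θ => πo θ ω s a) θ₀)
    (hdQ : ∀ s ω p, DifferentiableAt ℝ (fun θ => QΩ θ s ω p) θ₀)
    (s₀ : S) (ω₀ : O) :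
    ∑ p, w p * deriv (fun θ => QΩ θ s₀ ω₀ p) θ₀ =
      ∑ q : S × O, (∑' k : ℕ, PgamIter w K γ (πo θ₀) β πΩ k (s₀, ω₀) q) *
        (∑ a, deriv (fun θ => πo θ q.2 q.1 a) θ₀ * (∑ p, w p * Qo θ₀ q.1 q.2 a p)) := by
  have hfix := eq_add_Pgam_mulVec_of_hasDerivAt
    (V := fun θ x => ∑ p, w p * QΩ θ x.1 x.2 p) (Q := fun θ s ω a => ∑ p, w p * Qo θ s ω a p)
    (fun θ => sum_mul_QΩ_eq (hQΩ θ)) (fun θ => sum_mul_Qo_eq hw1 (hQo θ) (hQβ θ) (hVΩ θ)) hdπ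
    (fun x => HasDerivAt.fun_sum fun p _ => (hdQ x.1 x.2 p).hasDerivAt.const_mul (w p))
  exact (sum_tsum_PgamIter_mul_eq_of_eq_add_mulVec hγ0 hγ1 hw0 hw1 hK0 hK1 (hπo0 θ₀) (hπo1 θ₀)
    hπΩ0 hπΩ1 hβ0 hβ1 hfix (s₀, ω₀)).symm

/-- Intra-option policy gradient theorem for the soft robust loss (Theorem 2). -/
theorem intra_option_policy_gradient_soft_robust
    [Nonempty S] [Nonempty O] [Nonempty A] [Nonempty P]
    (γ : ℝ) (hγ0 : 0 ≤ γ) (hγ1 : γ < 1)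
    (c : S → A → ℝ)
    (K : P → S → A → S → ℝ)
    (hK0 : ∀ p s a s', 0 ≤ K p s a s') (hK1 : ∀ p s a, ∑ s', K p s a s' = 1)
    (w : P → ℝ) (hw0 : ∀ p, 0 ≤ w p) (hw1 : ∑ p, w p = 1)
    (πΩ : S → O → ℝ)
    (hπΩ0 : ∀ s ω, 0 ≤ πΩ s ω) (hπΩ1 : ∀ s, ∑ ω, πΩ s ω = 1)
    (πo : ℝ → O → S → A → ℝ)
    (hπo0 : ∀ θ ω s a, 0 ≤ πo θ ω s a) (hπo1 : ∀ θ ω s, ∑ a, πo θ ω s a = 1)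
    (β : O → S → ℝ) (hβ0 : ∀ ω s, 0 ≤ β ω s) (hβ1 : ∀ ω s, β ω s ≤ 1)
    (QΩ : ℝ → S → O → P → ℝ) (Qo : ℝ → S → O → A → P → ℝ)
    (Qβ : ℝ → S → O → P → ℝ) (VΩ : ℝ → S → P → ℝ)
    (hQΩ : ∀ θ s ω p, QΩ θ s ω p = ∑ a, πo θ ω s a * Qo θ s ω a p)
    (hQo : ∀ θ s ω a p,
      Qo θ s ω a p = c s a + γ * ∑ s', K p s a s' * (∑ p', w p' * Qβ θ s' ω p'))
    (hQβ : ∀ θ s ω p, Qβ θ s ω p = (1 - β ω s) * QΩ θ s ω p + β ω s * VΩ θ s p)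
    (hVΩ : ∀ θ s p, VΩ θ s p = ∑ ω, πΩ s ω * QΩ θ s ω p)
    (θ₀ : ℝ)
    (hdπ : ∀ ω s a, DifferentiableAt ℝ (fun θ => πo θ ω s a) θ₀)
    (hdQ : ∀ s ω p, DifferentiableAt ℝ (fun θ => QΩ θ s ω p) θ₀)
    (s₀ : S) (ω₀ : O) :
    ∑ p, w p * deriv (fun θ => QΩ θ s₀ ω₀ p) θ₀ =
      ∑ q : S × O, (∑' k : ℕ, PgamIter w K γ (πo θ₀) β πΩ k (s₀, ω₀) q) *
        (∑ a, deriv (fun θ => πo θ q.2 q.1 a) θ₀ * (∑ p, w p * Qo θ₀ q.1 q.2 a p)) :=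
  intra_option_policy_gradient_soft_robust_general γ hγ0 hγ1 c K hK0 hK1 w hw0 hw1 πΩ hπΩ0 hπΩ1 πo
    hπo0 hπo1 β hβ0 hβ1 QΩ Qo Qβ VΩ hQΩ hQo hQβ hVΩ θ₀ hdπ hdQ s₀ ω₀
end

section
/- One-step recursion for the soft robust policy-over-options gradient (intermediate claim in the proof of Theorem 1): In the setting of the policy-over-options gradient theorem (parameterized family πΩ : ℝ → S → O → ℝ, θ-independent πo, β, K, c, w, value functions (QΩ θ, Qo θ, Qβ θ, VΩ θ) satisfying the rectangular Bellman system for each θ, differentiability of πΩ and QΩ in θ at θ₀), for all s ∈ S and ω ∈ O: ∑_p w p * deriv (θ ↦ QΩ θ s ω p) θ₀ = (∑_a πo ω s a * γ * ∑_{s'} K̄ s a s' * β ω s' * ∑_{ω'} (deriv (θ ↦ πΩ θ s' ω') θ₀) * Q̄Ω θ₀ s' ω') + ∑_{(s',ω')} Pγ θ₀ ((s,ω),(s',ω')) * (∑_{p'} w p' * deriv (θ ↦ QΩ θ s' ω' p') θ₀). -/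
open scoped Classical

open Finset

variable {S O A P : Type*} [Fintype S] [Fintype O] [Fintype A] [Fintype P]

/-!
Because the parameter is redrawn at every state, the continuation value `∑ p', w p' * Qβ s' ω p'`
does not depend on the parameter drawn at `s`. Averaging the Bellman system over `w` therefore
closes up: `Q̄Ω θ = c̄ + Pγ θ Q̄Ω θ`, where `θ` enters `Pγ θ` only affinely through `πΩ θ`.
Differentiating this identity at `θ₀` by the product rule gives the recursion: the derivative of
`Pγ θ` produces the first term, `Pγ θ₀` applied to the derivative of `Q̄Ω` the second.
-/

section Bellman

variable (w : P → ℝ) (K : P → S → A → S → ℝ) (γ : ℝ) (πo : O → S → A → ℝ) (β : O → S → ℝ)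

theorem sum_weight_mul_sum_kernel_mul (f : A → ℝ) (G : S → ℝ) (s : S) :
    ∑ p, w p * ∑ a, f a * ∑ s', K p s a s' * G s' = ∑ a, f a * ∑ s', Kbar w K s a s' * G s' := by
  simp only [Kbar, mul_sum, sum_mul]
  rw [sum_comm]
  refine sum_congr rfl fun a _ => ?_
  rw [sum_comm]
  exact sum_congr rfl fun _ _ => sum_congr rfl fun _ _ => by ring

theorem sum_Pgam_mul (π D : S → O → ℝ) (s : S) (ω : O) :
    ∑ q, Pgam w K γ πo β π (s, ω) q * D q.1 q.2 =
      ∑ a, πo ω s a * γ * ∑ s', Kbar w K s a s' *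
        ((1 - β ω s') * D s' ω + β ω s' * ∑ ω', π s' ω' * D s' ω') := by
  have stay_or_switch (s' : S) :
      ∑ ω', ((1 - β ω s') * (if ω' = ω then 1 else 0) + β ω s' * π s' ω') * D s' ω' =
        (1 - β ω s') * D s' ω + β ω s' * ∑ ω', π s' ω' * D s' ω' := by
    simp [add_mul, sum_add_distrib, mul_sum, mul_assoc]
  calc ∑ q, Pgam w K γ πo β π (s, ω) q * D q.1 q.2
      = ∑ a, ∑ s', πo ω s a * γ * Kbar w K s a s' * ∑ ω',
          ((1 - β ω s') * (if ω' = ω then 1 else 0) + β ω s' * π s' ω') * D s' ω' := by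
        simp only [Fintype.sum_prod_type, Pgam, sum_mul, mul_sum]
        conv_rhs => rw [sum_comm]
        refine sum_congr rfl fun s' _ => ?_
        rw [sum_comm]
        exact sum_congr rfl fun _ _ => sum_congr rfl fun _ _ => by ring
    _ = _ := by simp only [stay_or_switch, mul_sum, mul_assoc]

theorem sum_weight_mul_QΩ_eq (c : S → A → ℝ) (π : S → O → ℝ) (QΩ Qβ : S → O → P → ℝ)
    (Qo : S → O → A → P → ℝ) (VΩ : S → P → ℝ)
    (hQΩ : ∀ s ω p, QΩ s ω p = ∑ a, πo ω s a * Qo s ω a p)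
    (hQo : ∀ s ω a p, Qo s ω a p = c s a + γ * ∑ s', K p s a s' * (∑ p', w p' * Qβ s' ω p'))
    (hQβ : ∀ s ω p, Qβ s ω p = (1 - β ω s) * QΩ s ω p + β ω s * VΩ s p)
    (hVΩ : ∀ s p, VΩ s p = ∑ ω, π s ω * QΩ s ω p) (s : S) (ω : O) :
    ∑ p, w p * QΩ s ω p =
      ∑ p, w p * ∑ a, πo ω s a * c s a +
        ∑ q, Pgam w K γ πo β π (s, ω) q * ∑ p, w p * QΩ q.1 q.2 p := by
  have avg_Qβ (s' : S) (ω : O) : ∑ p, w p * Qβ s' ω p =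
      (1 - β ω s') * ∑ p, w p * QΩ s' ω p + β ω s' * ∑ ω', π s' ω' * ∑ p, w p * QΩ s' ω' p := by
    simp only [hQβ, hVΩ, mul_add, sum_add_distrib, mul_sum]
    congr 1
    · exact sum_congr rfl fun _ _ => by ring
    · rw [sum_comm]
      exact sum_congr rfl fun _ _ => sum_congr rfl fun _ _ => by ring
  rw [sum_Pgam_mul w K γ πo β π (fun s' ω' => ∑ p, w p * QΩ s' ω' p)]
  calc ∑ p, w p * QΩ s ω p
      = ∑ p, w p * ∑ a, πo ω s a * c s a +
          ∑ p, w p * ∑ a, πo ω s a * γ * ∑ s', K p s a s' * ∑ p', w p' * Qβ s' ω p' := by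
        simp only [hQΩ, hQo, mul_add, sum_add_distrib, mul_assoc]
    _ = _ := by
        rw [sum_weight_mul_sum_kernel_mul]
        simp only [avg_Qβ]

theorem hasDerivAt_sum_Pgam_mul {π : ℝ → S → O → ℝ} {dπ : S → O → ℝ} {D : ℝ → S → O → ℝ}
    {dD : S → O → ℝ} {θ₀ : ℝ} (hπ : ∀ s ω, HasDerivAt (fun θ => π θ s ω) (dπ s ω) θ₀)
    (hD : ∀ s ω, HasDerivAt (fun θ => D θ s ω) (dD s ω) θ₀) (s : S) (ω : O) :
    HasDerivAt (fun θ => ∑ q, Pgam w K γ πo β (π θ) (s, ω) q * D θ q.1 q.2)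
      ((∑ a, πo ω s a * γ * ∑ s', Kbar w K s a s' * β ω s' * ∑ ω', dπ s' ω' * D θ₀ s' ω') +
        ∑ q, Pgam w K γ πo β (π θ₀) (s, ω) q * dD q.1 q.2) θ₀ := by
  have hPgam (q : S × O) : HasDerivAt (fun θ => Pgam w K γ πo β (π θ) (s, ω) q)
      (∑ a, πo ω s a * γ * Kbar w K s a q.1 * (β ω q.1 * dπ q.1 q.2)) θ₀ :=
    HasDerivAt.fun_sum fun a _ =>
      (((hπ q.1 q.2).const_mul (β ω q.1)).const_add _).const_mul _
  refine (HasDerivAt.fun_sum fun q _ => (hPgam q).mul (hD q.1 q.2)).congr_deriv ?_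
  rw [sum_add_distrib]
  congr 1
  simp only [Fintype.sum_prod_type, sum_mul, mul_sum]
  conv_rhs => rw [sum_comm]
  refine sum_congr rfl fun s' _ => ?_
  rw [sum_comm]
  exact sum_congr rfl fun _ _ => sum_congr rfl fun _ _ => by ring

end Bellman

theorem policy_over_options_gradient_one_step_general
    (γ : ℝ)
    (c : S → A → ℝ)
    (K : P → S → A → S → ℝ)
    (w : P → ℝ)
    (πΩ : ℝ → S → O → ℝ)
    (πo : O → S → A → ℝ)
    (β : O → S → ℝ)
    (QΩ : ℝ → S → O → P → ℝ) (Qo : ℝ → S → O → A → P → ℝ)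
    (Qβ : ℝ → S → O → P → ℝ) (VΩ : ℝ → S → P → ℝ)
    (hQΩ : ∀ θ s ω p, QΩ θ s ω p = ∑ a, πo ω s a * Qo θ s ω a p)
    (hQo : ∀ θ s ω a p,
      Qo θ s ω a p = c s a + γ * ∑ s', K p s a s' * (∑ p', w p' * Qβ θ s' ω p'))
    (hQβ : ∀ θ s ω p, Qβ θ s ω p = (1 - β ω s) * QΩ θ s ω p + β ω s * VΩ θ s p)
    (hVΩ : ∀ θ s p, VΩ θ s p = ∑ ω, πΩ θ s ω * QΩ θ s ω p)
    (θ₀ : ℝ)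
    (hdπ : ∀ s ω, DifferentiableAt ℝ (fun θ => πΩ θ s ω) θ₀)
    (hdQ : ∀ s ω p, DifferentiableAt ℝ (fun θ => QΩ θ s ω p) θ₀) :
    ∀ (s : S) (ω : O),
      ∑ p, w p * deriv (fun θ => QΩ θ s ω p) θ₀ =
        (∑ a, πo ω s a * γ * ∑ s', Kbar w K s a s' * β ω s' *
            ∑ ω', deriv (fun θ => πΩ θ s' ω') θ₀ * (∑ p, w p * QΩ θ₀ s' ω' p)) +
        ∑ q : S × O, Pgam w K γ πo β (πΩ θ₀) (s, ω) q *
          (∑ p', w p' * deriv (fun θ => QΩ θ q.1 q.2 p') θ₀) := by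
  intro s ω
  have hQbar (s : S) (ω : O) : HasDerivAt (fun θ => ∑ p, w p * QΩ θ s ω p)
      (∑ p, w p * deriv (fun θ => QΩ θ s ω p) θ₀) θ₀ :=
    HasDerivAt.fun_sum fun p _ => (hdQ s ω p).hasDerivAt.const_mul (w p)
  have bellman : (fun θ => ∑ p, w p * QΩ θ s ω p) = fun θ =>
      ∑ p, w p * ∑ a, πo ω s a * c s a +
        ∑ q, Pgam w K γ πo β (πΩ θ) (s, ω) q * ∑ p, w p * QΩ θ q.1 q.2 p :=
    funext fun θ => sum_weight_mul_QΩ_eq w K γ πo β c (πΩ θ) (QΩ θ) (Qβ θ) (Qo θ) (VΩ θ)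
      (hQΩ θ) (hQo θ) (hQβ θ) (hVΩ θ) s ω
  have hRHS := (hasDerivAt_sum_Pgam_mul w K γ πo β (fun s ω => (hdπ s ω).hasDerivAt)
    hQbar s ω).const_add (∑ p, w p * ∑ a, πo ω s a * c s a)
  rw [← bellman] at hRHS
  exact (hQbar s ω).unique hRHS

/-- One-step recursion for the soft robust policy-over-options gradient
(intermediate claim in the proof of Theorem 1). -/
theorem policy_over_options_gradient_one_step
    [Nonempty S] [Nonempty O] [Nonempty A] [Nonempty P]
    (γ : ℝ) (hγ0 : 0 ≤ γ) (hγ1 : γ < 1)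
    (c : S → A → ℝ)
    (K : P → S → A → S → ℝ)
    (hK0 : ∀ p s a s', 0 ≤ K p s a s') (hK1 : ∀ p s a, ∑ s', K p s a s' = 1)
    (w : P → ℝ) (hw0 : ∀ p, 0 ≤ w p) (hw1 : ∑ p, w p = 1)
    (πΩ : ℝ → S → O → ℝ)
    (hπΩ0 : ∀ θ s ω, 0 ≤ πΩ θ s ω) (hπΩ1 : ∀ θ s, ∑ ω, πΩ θ s ω = 1)
    (πo : O → S → A → ℝ)
    (hπo0 : ∀ ω s a, 0 ≤ πo ω s a) (hπo1 : ∀ ω s, ∑ a, πo ω s a = 1)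
    (β : O → S → ℝ) (hβ0 : ∀ ω s, 0 ≤ β ω s) (hβ1 : ∀ ω s, β ω s ≤ 1)
    (QΩ : ℝ → S → O → P → ℝ) (Qo : ℝ → S → O → A → P → ℝ)
    (Qβ : ℝ → S → O → P → ℝ) (VΩ : ℝ → S → P → ℝ)
    (hQΩ : ∀ θ s ω p, QΩ θ s ω p = ∑ a, πo ω s a * Qo θ s ω a p)
    (hQo : ∀ θ s ω a p,
      Qo θ s ω a p = c s a + γ * ∑ s', K p s a s' * (∑ p', w p' * Qβ θ s' ω p'))
    (hQβ : ∀ θ s ω p, Qβ θ s ω p = (1 - β ω s) * QΩ θ s ω p + β ω s * VΩ θ s p)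
    (hVΩ : ∀ θ s p, VΩ θ s p = ∑ ω, πΩ θ s ω * QΩ θ s ω p)
    (θ₀ : ℝ)
    (hdπ : ∀ s ω, DifferentiableAt ℝ (fun θ => πΩ θ s ω) θ₀)
    (hdQ : ∀ s ω p, DifferentiableAt ℝ (fun θ => QΩ θ s ω p) θ₀) :
    ∀ (s : S) (ω : O),
      ∑ p, w p * deriv (fun θ => QΩ θ s ω p) θ₀ =
        (∑ a, πo ω s a * γ * ∑ s', Kbar w K s a s' * β ω s' *
            ∑ ω', deriv (fun θ => πΩ θ s' ω') θ₀ * (∑ p, w p * QΩ θ₀ s' ω' p)) +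
        ∑ q : S × O, Pgam w K γ πo β (πΩ θ₀) (s, ω) q *
          (∑ p', w p' * deriv (fun θ => QΩ θ q.1 q.2 p') θ₀) :=
  policy_over_options_gradient_one_step_general γ c K w πΩ πo β QΩ Qo Qβ VΩ hQΩ hQo hQβ hVΩ θ₀ hdπ
    hdQ
end
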